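/- arXiv:2508.17370 — 9 statements merged into one kernel-verified Lean document; each statement's English description precedes it below -/
import Mathlib

section
/- For every ε > 0 and every real k ≠ 0, the cubic polynomial P_k(λ) = −λ³ − (1/ε)λ² − 3k²λ − (5/3)k²/ε has exactly one real root, and its other two roots are non-real and are complex conjugates of each other. -/
set_option maxHeartbeats 800000

/-- The characteristic polynomial `P_k(λ)` of the Grad generator. -/
noncomputable def gradP (ε k : ℝ) (l : ℂ) : ℂ :=
  -l^3 - (1/ε) * l^2 - 3 * k^2 * l - (5/3) * k^2 / ε

theorem grad_one_real_root_two_conjugate_nonreal_roots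
    (ε : ℝ) (hε : 0 < ε) (k : ℝ) (hk : k ≠ 0) :
    ∃ (r : ℝ) (z : ℂ), z.im ≠ 0 ∧
      (∀ l : ℂ, gradP ε k l = 0 ↔ (l = (r : ℂ) ∨ l = z ∨ l = starRingEnd ℂ z)) := by
  have hk2 : 0 < k ^ 2 := by positivity
  set a : ℝ := 1 / ε with ha_def
  have ha : 0 < a := by positivity
  set b : ℝ := 3 * k ^ 2 with hb_def
  have hb : 0 < b := by positivity
  set c : ℝ := (5 / 3) * k ^ 2 * a with hc_def
  have hc : 0 < c := by positivity
  -- real root by IVT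
  set g : ℝ → ℝ := fun x => x ^ 3 + a * x ^ 2 + b * x + c with hg_def
  have hgcont : Continuous g := by fun_prop
  set M : ℝ := 1 + a + b + c with hM_def
  have hM1 : (1 : ℝ) ≤ M := by nlinarith
  have hgneg : g (-M) ≤ 0 := by
    show (-M) ^ 3 + a * (-M) ^ 2 + b * (-M) + c ≤ 0
    nlinarith [sq_nonneg M, mul_pos hb (show (0:ℝ) < M by linarith), sq_nonneg (M - 1)]
  have hgpos : (0 : ℝ) ≤ g 0 := by
    show (0:ℝ) ^ 3 + a * 0 ^ 2 + b * 0 + c ≥ 0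
    nlinarith
  obtain ⟨r, -, hr0⟩ :=
    intermediate_value_Icc (by linarith : -M ≤ (0:ℝ)) hgcont.continuousOn ⟨hgneg, hgpos⟩
  have hr : r ^ 3 + a * r ^ 2 + b * r + c = 0 := hr0
  -- quadratic factor
  set p : ℝ := a + r with hp_def
  set q : ℝ := b + a * r + r ^ 2 with hq_def
  -- discriminant is negative
  have hdisc : p ^ 2 - 4 * q < 0 := by
    have hΔ : 18 * a * b * c - 4 * a ^ 3 * c + a ^ 2 * b ^ 2 - 4 * b ^ 3 - 27 * c ^ 2 < 0 := by
      rw [hb_def, hc_def]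
      nlinarith [mul_nonneg hk2.le (sq_nonneg (9 * k ^ 2 - a ^ 2)),
        mul_pos hk2 (pow_pos ha 4)]
    have hident : (p ^ 2 - 4 * q) * (3 * r ^ 2 + 2 * a * r + b) ^ 2 =
        18 * a * b * c - 4 * a ^ 3 * c + a ^ 2 * b ^ 2 - 4 * b ^ 3 - 27 * c ^ 2 := by
      rw [hp_def, hq_def]
      linear_combination (4 * a ^ 3 - 18 * a * b + 27 * c - 27 * b * r - 27 * a * r ^ 2
        - 27 * r ^ 3) * hr
    nlinarith [sq_nonneg (3 * r ^ 2 + 2 * a * r + b), sq_nonneg (p ^ 2 - 4 * q)]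
  have hqpos : 0 < 4 * q - p ^ 2 := by linarith [sq_nonneg p]
  set t : ℝ := Real.sqrt (4 * q - p ^ 2) / 2 with ht_def
  have ht : 0 < t := by positivity
  have ht2 : t ^ 2 = (4 * q - p ^ 2) / 4 := by
    rw [ht_def, div_pow, Real.sq_sqrt hqpos.le]; ring
  refine ⟨r, ⟨-p / 2, t⟩, by simpa using ht.ne', ?_⟩
  set z : ℂ := ⟨-p / 2, t⟩ with hz_def
  have hzsum : z + starRingEnd ℂ z = -((p : ℝ) : ℂ) := by
    apply Complex.ext <;> simp [hz_def]
  have hnq : Complex.normSq z = q := by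
    rw [hz_def]
    rw [Complex.normSq_mk]
    linear_combination ht2
  have hzprod : z * starRingEnd ℂ z = ((q : ℝ) : ℂ) := by
    rw [Complex.mul_conj, hnq]
  have hεC : (ε : ℂ) ≠ 0 := by exact_mod_cast hε.ne'
  have hrC : (r : ℂ) ^ 3 + (a : ℝ) * (r:ℂ) ^ 2 + (b : ℝ) * (r:ℂ) + (c : ℝ) = 0 := by
    exact_mod_cast congrArg (Complex.ofReal) hr
  have key : ∀ l : ℂ, gradP ε k l = -((l - (r : ℂ)) * ((l - z) * (l - starRingEnd ℂ z))) := by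
    intro l
    have hquad : (l - z) * (l - starRingEnd ℂ z) = l ^ 2 + ((p : ℝ) : ℂ) * l + ((q : ℝ) : ℂ) := by
      linear_combination (-l) * hzsum + hzprod
    rw [hquad]
    show -l^3 - (1/(ε:ℂ)) * l^2 - 3 * (k:ℂ)^2 * l - (5/3) * (k:ℂ)^2 / (ε:ℂ) = _
    have haC : ((a : ℝ) : ℂ) = 1 / (ε:ℂ) := by rw [ha_def]; push_cast; ring
    have hpC : ((p : ℝ) : ℂ) = ((a:ℝ):ℂ) + (r : ℂ) := by rw [hp_def]; push_cast; ring
    have hqC : ((q : ℝ) : ℂ) = ((b:ℝ):ℂ) + ((a:ℝ):ℂ) * r + (r:ℂ) ^ 2 := by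
      rw [hq_def]; push_cast; ring
    have hbC : ((b : ℝ) : ℂ) = 3 * (k:ℂ) ^ 2 := by rw [hb_def]; push_cast; ring
    have hcC : ((c : ℝ) : ℂ) = (5/3) * (k:ℂ) ^ 2 / (ε:ℂ) := by
      rw [hc_def, ha_def]; push_cast; ring
    rw [hpC, hqC, haC, hbC]
    linear_combination -hrC + hcC + (haC) * (r:ℂ)^2 + hbC * (r:ℂ)
  intro l
  rw [key]
  constructor
  · intro h
    rw [neg_eq_zero, mul_eq_zero, mul_eq_zero, sub_eq_zero, sub_eq_zero, sub_eq_zero] at h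
    tauto
  · rintro (rfl | rfl | rfl) <;> ring
end

section
/- For every ε > 0 and every real k ≠ 0, the unique real root λ_diff of P_k(λ) = −λ³ − (1/ε)λ² − 3k²λ − (5/3)k²/ε is given explicitly by λ_diff = (1/(3ε)) [ ∛(−1 − 9k²ε² + 3ε√(5k² − 18k⁴ε² + 81k⁶ε⁴)) + ∛(−1 − 9k²ε² − 3ε√(5k² − 18k⁴ε² + 81k⁶ε⁴)) − 1 ], where ∛ denotes the real cube root and the square root is real (its argument being positive). -/
/-- The real cube root of a real number. -/
noncomputable def realCbrt (x : ℝ) : ℝ :=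
  if 0 ≤ x then x ^ ((1 : ℝ)/3) else -((-x) ^ ((1 : ℝ)/3))

lemma realCbrt_cube (x : ℝ) : (realCbrt x)^3 = x := by
  unfold realCbrt
  rcases le_or_gt 0 x with h | h
  · simp only [if_pos h]
    rw [← Real.rpow_natCast (x ^ ((1:ℝ)/3)) 3, ← Real.rpow_mul h]
    norm_num
  · simp only [if_neg (not_le.mpr h)]
    have h' : (0:ℝ) ≤ -x := by linarith
    rw [Odd.neg_pow ⟨1, by norm_num⟩, ← Real.rpow_natCast ((-x) ^ ((1:ℝ)/3)) 3,
      ← Real.rpow_mul h']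
    norm_num

lemma cube_inj {a b : ℝ} (h : a^3 = b^3) : a = b :=
  (Odd.strictMono_pow (R := ℝ) ⟨1, by norm_num⟩).injective h

set_option maxHeartbeats 1000000 in
theorem grad_diffusion_mode_explicit (ε : ℝ) (hε : 0 < ε) (k : ℝ) (hk : k ≠ 0)
    (ldiff : ℝ) (hroot : gradP ε k ldiff = 0) :
    ldiff = (1 / (3 * ε)) *
      (realCbrt (-1 - 9 * k^2 * ε^2 +
          3 * ε * Real.sqrt (5 * k^2 - 18 * k^4 * ε^2 + 81 * k^6 * ε^4)) +
       realCbrt (-1 - 9 * k^2 * ε^2 -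
          3 * ε * Real.sqrt (5 * k^2 - 18 * k^4 * ε^2 + 81 * k^6 * ε^4)) - 1) := by
  have hε' : ε ≠ 0 := ne_of_gt hε
  have hk2 : 0 < k^2 := by positivity
  set D : ℝ := 5 * k^2 - 18 * k^4 * ε^2 + 81 * k^6 * ε^4 with hDdef
  have hD : 0 < D := by
    have h1 : 0 < (9*k^2*ε^2 - 1)^2 + 4 := by nlinarith [sq_nonneg (9*k^2*ε^2 - 1)]
    nlinarith [mul_pos hk2 h1]
  set s : ℝ := Real.sqrt D with hsdef
  have hs2 : s^2 = D := Real.sq_sqrt hD.le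
  have hs : 0 < s := Real.sqrt_pos.mpr hD
  set A : ℝ := -1 - 9 * k^2 * ε^2 + 3 * ε * s with hAdef
  set B : ℝ := -1 - 9 * k^2 * ε^2 - 3 * ε * s with hBdef
  set u : ℝ := realCbrt A with hudef
  set v : ℝ := realCbrt B with hvdef
  have hu : u^3 = A := realCbrt_cube A
  have hv : v^3 = B := realCbrt_cube B
  have huv : u * v = 1 - 9 * k^2 * ε^2 := by
    apply cube_inj
    rw [mul_pow, hu, hv, hAdef, hBdef]
    linear_combination (-9*ε^2) * hs2
  have hune : u ≠ v := by
    intro h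
    have hAB : A = B := by rw [← hu, ← hv, h]
    rw [hAdef, hBdef] at hAB
    nlinarith [mul_pos hε hs]
  set c : ℝ := (u + v - 1) / (3 * ε) with hcdef
  have hw3 : (u + v)^3 = 3 * (1 - 9*k^2*ε^2) * (u + v) - (2 + 18*k^2*ε^2) := by
    have h : (u + v)^3 = u^3 + v^3 + 3*(u*v)*(u+v) := by ring
    rw [h, hu, hv, huv, hAdef, hBdef]; ring
  have hc : c^3 + (1/ε)*c^2 + 3*k^2*c + 5/3*k^2/ε = 0 := by
    rw [hcdef]
    field_simp
    linear_combination hw3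
  have hx : ldiff^3 + (1/ε)*ldiff^2 + 3*k^2*ldiff + 5/3*k^2/ε = 0 := by
    have h := hroot
    unfold gradP at h
    have h2 : ((ldiff^3 + (1/ε)*ldiff^2 + 3*k^2*ldiff + 5/3*k^2/ε : ℝ) : ℂ) = 0 := by
      push_cast
      linear_combination -h
    exact_mod_cast h2
  have huvsq : (0:ℝ) < (u - v)^2 := by
    have : u - v ≠ 0 := sub_ne_zero.mpr hune
    positivity
  have hE : 0 < 3*c^2 + 2*(1/ε)*c - (1/ε)^2 + 12*k^2 := by
    have heq : (3*c^2 + 2*(1/ε)*c - (1/ε)^2 + 12*k^2) * (3*ε^2) = (u - v)^2 := by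
      rw [hcdef]
      field_simp
      linear_combination 4 * huv
    nlinarith [mul_pos hε hε]
  have hQ : 0 < ldiff^2 + ldiff*c + c^2 + (1/ε)*(ldiff + c) + 3*k^2 := by
    nlinarith [sq_nonneg (2*ldiff + c + 1/ε), hE]
  have hfac : (ldiff - c) * (ldiff^2 + ldiff*c + c^2 + (1/ε)*(ldiff + c) + 3*k^2) = 0 := by
    linear_combination hx - hc
  have hlc : ldiff = c := by
    rcases mul_eq_zero.mp hfac with h | h
    · linarith [sub_eq_zero.mp h]
    · exact absurd h (ne_of_gt hQ)
  rw [hlc, hcdef]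
  field_simp
end

section
/- For every ε > 0 and every real k ≠ 0, the unique real root λ_diff of P_k(λ) = −λ³ − (1/ε)λ² − 3k²λ − (5/3)k²/ε satisfies λ_diff < −1/(3ε), and each non-real root λ_ac satisfies Re λ_ac = (−1/ε − λ_diff)/2 > −1/(3ε). In particular λ_diff < Re λ_ac, i.e., the diffusion mode decays strictly faster than the acoustic modes. -/
theorem grad_diffusion_decays_faster_than_acoustic
    (ε : ℝ) (hε : 0 < ε) (k : ℝ) (hk : k ≠ 0)
    (ldiff : ℝ) (hdiff : gradP ε k ldiff = 0) :
    ldiff < -1 / (3 * ε) ∧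
    ∀ lac : ℂ, gradP ε k lac = 0 → lac.im ≠ 0 →
      lac.re = (-1/ε - ldiff) / 2 ∧ -1 / (3 * ε) < lac.re ∧ ldiff < lac.re := by
  have hε' : ε ≠ 0 := ne_of_gt hε
  have hεC : (ε : ℂ) ≠ 0 := by exact_mod_cast hε'
  have hk2 : 0 < k ^ 2 := by positivity
  have h2 : ε * (1 / ε) = 1 := by field_simp
  have h2C : (ε : ℂ) * (1 / (ε : ℂ)) = 1 := by field_simp
  -- real cubic equation for ldiff
  have h0 : -ldiff ^ 3 - (1 / ε) * ldiff ^ 2 - 3 * k ^ 2 * ldiff - (5 / 3) * k ^ 2 / ε = 0 := by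
    have h0C : ((-ldiff ^ 3 - (1 / ε) * ldiff ^ 2 - 3 * k ^ 2 * ldiff - (5 / 3) * k ^ 2 / ε : ℝ) : ℂ) = 0 := by
      push_cast
      unfold gradP at hdiff
      linear_combination hdiff
    exact_mod_cast h0C
  -- multiplied through by ε
  have hE : ε * ldiff ^ 3 + ldiff ^ 2 + 3 * k ^ 2 * ε * ldiff + (5 / 3) * k ^ 2 = 0 := by
    linear_combination (-ε) * h0 - (ldiff ^ 2 + 5 / 3 * k ^ 2) * h2
  -- Part 1 : ldiff < -1/(3ε)
  have part1 : ldiff < -1 / (3 * ε) := by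
    by_contra hcon
    push_neg at hcon
    have hcon' : -1 ≤ ldiff * (3 * ε) := (div_le_iff₀ (by positivity)).mp hcon
    have h1 : -1 / 3 ≤ ε * ldiff := by linarith
    have ha : 0 ≤ ldiff ^ 2 * (ε * ldiff + 1) := by nlinarith [sq_nonneg ldiff]
    have hb : 0 < 3 * k ^ 2 * (ε * ldiff + 5 / 9) := by nlinarith
    nlinarith [ha, hb, hE]
  refine ⟨part1, ?_⟩
  intro lac hlac hy
  have hd3 : ldiff * (3 * ε) < -1 := (lt_div_iff₀ (by positivity)).mp part1
  -- factorization: gradP l - gradP d = -(l - d) * Q2(l)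
  have hfac : gradP ε k lac - gradP ε k ldiff =
      -((lac - (ldiff : ℂ)) * (lac * lac + lac * ldiff + (ldiff : ℂ) * ldiff +
        (1 / (ε : ℂ)) * (lac + ldiff) + 3 * (k : ℂ) ^ 2)) := by
    unfold gradP; ring
  rw [hlac, hdiff] at hfac
  have hQ : (lac - (ldiff : ℂ)) * (lac * lac + lac * ldiff + (ldiff : ℂ) * ldiff +
      (1 / (ε : ℂ)) * (lac + ldiff) + 3 * (k : ℂ) ^ 2) = 0 := by
    linear_combination hfac
  have hne : lac - (ldiff : ℂ) ≠ 0 := by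
    intro h0'
    apply hy
    have : lac = (ldiff : ℂ) := by rwa [sub_eq_zero] at h0'
    rw [this]; simp
  have hQ2 : lac * lac + lac * ldiff + (ldiff : ℂ) * ldiff +
      (1 / (ε : ℂ)) * (lac + ldiff) + 3 * (k : ℂ) ^ 2 = 0 :=
    (mul_eq_zero.mp hQ).resolve_left hne
  -- clear denominators
  have hQ2' : (ε : ℂ) * (lac * lac) + ((ε * ldiff : ℝ) : ℂ) * lac + lac +
      (((ε * ldiff ^ 2 + ldiff + 3 * ε * k ^ 2) : ℝ) : ℂ) = 0 := by
    push_cast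
    linear_combination (ε : ℂ) * hQ2 - (lac + (ldiff : ℂ)) * h2C
  -- imaginary part
  have him := congrArg Complex.im hQ2'
  simp [Complex.add_im, Complex.mul_im, Complex.mul_re, pow_two,
    Complex.ofReal_re, Complex.ofReal_im] at him
  have hfactor : lac.im * (2 * ε * lac.re + ε * ldiff + 1) = 0 := by
    linear_combination him
  have hx : 2 * ε * lac.re + ε * ldiff + 1 = 0 :=
    (mul_eq_zero.mp hfactor).resolve_left hy
  have hre : lac.re = (-1 / ε - ldiff) / 2 := by
    field_simp
    linarith [hx]
  have hgt : -1 / (3 * ε) < lac.re := by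
    rw [div_lt_iff₀ (by positivity : (0:ℝ) < 3 * ε)]
    nlinarith [hx, hd3]
  exact ⟨hre, hgt, lt_trans part1 hgt⟩
end

section
/- Fix a real wave number k ≠ 0 and for each ε > 0 let λ_diff(ε) denote the unique real root of P_k(λ) = −λ³ − (1/ε)λ² − 3k²λ − (5/3)k²/ε. Then λ_diff(ε) + 1/ε remains bounded as ε → 0⁺: there exist constants C > 0 and ε₀ > 0 such that |λ_diff(ε) + 1/ε| ≤ C for all 0 < ε < ε₀ (i.e., λ_diff(ε) = −1/ε + O(1)). -/
theorem grad_diffusion_minus_leading_order_bounded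
    (k : ℝ) (hk : k ≠ 0) (ldiff : ℝ → ℝ)
    (hroot : ∀ ε : ℝ, 0 < ε → gradP ε k (ldiff ε) = 0) :
    ∃ C > (0 : ℝ), ∃ ε₀ > (0 : ℝ), ∀ ε : ℝ, 0 < ε → ε < ε₀ →
      |ldiff ε + 1 / ε| ≤ C := by
  have hk2 : (0:ℝ) < k^2 := by positivity
  refine ⟨16*k^2/3 + 1, by positivity, 1, one_pos, ?_⟩
  intro ε hε hε1
  have hεne : ε ≠ 0 := ne_of_gt hε
  set l := ldiff ε with hl
  have E0 := hroot ε hε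
  unfold gradP at E0
  -- real root equation
  have E : -l^3 - (1/ε)*l^2 - 3*k^2*l - (5/3)*k^2/ε = 0 := by
    have h : ((-l^3 - (1/ε)*l^2 - 3*k^2*l - (5/3)*k^2/ε : ℝ) : ℂ) = 0 := by
      push_cast
      linear_combination E0
    exact_mod_cast h
  field_simp at E
  -- the key algebraic identity: (εl+1)(l²+3k²) = (4/3)k²
  have h2 : ε * ((ε*l + 1) * (l^2 + 3*k^2) - (4/3)*k^2) = 0 := by
    linear_combination (-ε/3 : ℝ) * E
  have key2 : (ε*l + 1) * (l^2 + 3*k^2) = (4/3)*k^2 := by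
    rcases mul_eq_zero.1 h2 with h | h
    · exact absurd h hεne
    · linarith [sub_eq_zero.1 h]
  have hq : (0:ℝ) < l^2 + 3*k^2 := by positivity
  have hm : 0 < ε*l + 1 := by nlinarith [key2, hq, hk2]
  have hrepr : l + 1/ε = (ε*l + 1)/ε := by field_simp
  rw [hrepr, abs_of_pos (by positivity), div_le_iff₀ hε]
  by_cases hcase : (ε*l)^2 ≥ 1/4
  · -- |l| ≥ 1/(2ε): then εl+1 ≤ 16k²ε²/3
    have h1 : (ε*l + 1) * (1/4) ≤ (4/3)*k^2*ε^2 := by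
      have h3 : (ε*l + 1) * ((ε*l)^2 + 3*k^2*ε^2) = (4/3)*k^2*ε^2 := by
        nlinarith [key2]
      nlinarith [hm, sq_nonneg (ε*k)]
    nlinarith [hε, hε1, hk2, mul_pos hε hε]
  · -- |l| < 1/(2ε): impossible
    push_neg at hcase
    exfalso
    have hbig : 1/2 < ε*l + 1 := by nlinarith [sq_nonneg (ε*l + 1/2)]
    have hsmall : (ε*l + 1) * (3*k^2) ≤ (4/3)*k^2 := by nlinarith [hm, sq_nonneg l]
    nlinarith [hk2]
end

section
/- Let ε > 0 and k ∈ ℝ with k ≠ 0, let λ₁, λ₂ be the two non-real complex-conjugate roots of P_k(λ) = −λ³ − (1/ε)λ² − 3k²λ − (5/3)k²/ε, set a_j = λ_j/k and b_j = (3/(4εk))(1 + ελ_j) for j = 1, 2, and assume the denominator D = 3 + 3ε(λ₁+λ₂) + ε²(3λ₁λ₂ − 4k²) is nonzero; define A = −4ε(1 + ε(λ₁+λ₂))/D and B = −4ε²/D. Then for all complex coefficients c₁, c₂, the vector (p̂, û, σ̂) = c₁·(−1 − a₁b₁, ib₁, 1) + c₂·(−1 − a₂b₂, ib₂, 1) satisfies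 the closure relation σ̂ = i k A û − k² B p̂. -/
/-- Per-eigenvector closure identity: purely algebraic. -/
lemma grad_key (ε k : ℝ) (hε : 0 < ε) (hk : k ≠ 0) (l m D : ℂ)
    (hD : D = 3 + 3 * ε * (l + m) + ε^2 * (3 * l * m - 4 * k^2))
    (hDne : D ≠ 0) :
    Complex.I * k * (-4 * ε * (1 + ε * (l + m)) / D) *
        (Complex.I * ((3 / (4 * ε * k)) * (1 + ε * l))) -
      k^2 * (-4 * ε^2 / D) *
        (-1 - (l / k) * ((3 / (4 * ε * k)) * (1 + ε * l))) = 1 := by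
  have hεC : (ε : ℂ) ≠ 0 := by exact_mod_cast ne_of_gt hε
  have hkC : (k : ℂ) ≠ 0 := by exact_mod_cast hk
  have h2 : Complex.I * Complex.I = -1 := Complex.I_mul_I
  have hrw : Complex.I * k * (-4 * ε * (1 + ε * (l + m)) / D) *
        (Complex.I * ((3 / (4 * ε * k)) * (1 + ε * l))) -
      k^2 * (-4 * ε^2 / D) *
        (-1 - (l / k) * ((3 / (4 * ε * k)) * (1 + ε * l))) =
      ((Complex.I * Complex.I) * k * (-4 * ε * (1 + ε * (l + m))) *
        ((3 / (4 * ε * k)) * (1 + ε * l)) -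
      k^2 * (-4 * ε^2) *
        (-1 - (l / k) * ((3 / (4 * ε * k)) * (1 + ε * l)))) / D := by
    ring
  rw [hrw, h2, div_eq_one_iff_eq hDne]
  field_simp
  have h3 : ((k:ℂ))^3 * ((k:ℂ)⁻¹)^3 * (((ε:ℂ))^2 * ((ε:ℂ)⁻¹)^2) = 1 := by
    rw [← mul_pow, ← mul_pow, mul_inv_cancel₀ hkC, mul_inv_cancel₀ hεC]; norm_num
  rw [hD]
  linear_combination

theorem grad_slow_manifold_closure (ε : ℝ) (hε : 0 < ε) (k : ℝ) (hk : k ≠ 0)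
    (l₁ l₂ : ℂ)
    (hroot₁ : gradP ε k l₁ = 0) (hroot₂ : gradP ε k l₂ = 0)
    (hnonreal : l₁.im ≠ 0) (hconj : l₂ = starRingEnd ℂ l₁)
    (a₁ a₂ b₁ b₂ D A B : ℂ)
    (ha₁ : a₁ = l₁ / k) (ha₂ : a₂ = l₂ / k)
    (hb₁ : b₁ = (3 / (4 * ε * k)) * (1 + ε * l₁))
    (hb₂ : b₂ = (3 / (4 * ε * k)) * (1 + ε * l₂))
    (hD : D = 3 + 3 * ε * (l₁ + l₂) + ε^2 * (3 * l₁ * l₂ - 4 * k^2))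
    (hDne : D ≠ 0)
    (hA : A = -4 * ε * (1 + ε * (l₁ + l₂)) / D)
    (hB : B = -4 * ε^2 / D) :
    ∀ c₁ c₂ : ℂ,
      c₁ * 1 + c₂ * 1 =
        Complex.I * k * A * (c₁ * (Complex.I * b₁) + c₂ * (Complex.I * b₂)) -
          k^2 * B * (c₁ * (-1 - a₁ * b₁) + c₂ * (-1 - a₂ * b₂)) := by
  have key₁ : Complex.I * k * A * (Complex.I * b₁) - k^2 * B * (-1 - a₁ * b₁) = 1 := by
    rw [hA, hB, hb₁, ha₁]
    exact grad_key ε k hε hk l₁ l₂ D hD hDne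
  have key₂ : Complex.I * k * A * (Complex.I * b₂) - k^2 * B * (-1 - a₂ * b₂) = 1 := by
    rw [hA, hB, hb₂, ha₂]
    have hD' : D = 3 + 3 * ε * (l₂ + l₁) + ε^2 * (3 * l₂ * l₁ - 4 * k^2) := by rw [hD]; ring
    have := grad_key ε k hε hk l₂ l₁ D hD' hDne
    rw [show l₂ + l₁ = l₁ + l₂ by ring] at this
    exact this
  intro c₁ c₂
  calc c₁ * 1 + c₂ * 1
      = c₁ * (Complex.I * k * A * (Complex.I * b₁) - k^2 * B * (-1 - a₁ * b₁))
        + c₂ * (Complex.I * k * A * (Complex.I * b₂) - k^2 * B * (-1 - a₂ * b₂)) := by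
        rw [key₁, key₂]
    _ = Complex.I * k * A * (c₁ * (Complex.I * b₁) + c₂ * (Complex.I * b₂)) -
          k^2 * B * (c₁ * (-1 - a₁ * b₁) + c₂ * (-1 - a₂ * b₂)) := by ring
end

section
/- Fix a real wave number k ≠ 0 and for each ε > 0 let λ_diff(ε) denote the unique real root of P_k(λ) = −λ³ − (1/ε)λ² − 3k²λ − (5/3)k²/ε. Then there exist no ε₀ > 0, constant C > 0, and function α : (0, ε₀) → ℂ such that both |λ_diff(ε) − α(ε)| ≤ C and |α(ε)·λ_diff(ε)| ≤ C hold for all ε ∈ (0, ε₀). Consequently, the fast hydrodynamics d/dt(p̂_f, û_f) = λ_diff(ε)(p̂_f, û_f) cannot be rewritten, via the fast-manifold relation λ_diff p̂_f = −(5/3)ik û_f, in a form whose generator remains bounded as ε → 0, and thus violates the Chapman–Enskog scaling. -/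
theorem grad_fast_hydrodynamics_cannot_be_bounded
    (k : ℝ) (hk : k ≠ 0) (ldiff : ℝ → ℝ)
    (hroot : ∀ ε : ℝ, 0 < ε → gradP ε k (ldiff ε) = 0) :
    ¬ ∃ (ε₀ : ℝ), 0 < ε₀ ∧ ∃ (C : ℝ), 0 < C ∧ ∃ α : ℝ → ℂ,
      ∀ ε : ℝ, 0 < ε → ε < ε₀ →
        ‖(ldiff ε : ℂ) - α ε‖ ≤ C ∧
        ‖α ε * (ldiff ε : ℂ)‖ ≤ C := by
  rintro ⟨ε₀, hε₀, C, hC, α, hα⟩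
  -- real form of the root equation, multiplied by ε
  have hreal : ∀ ε : ℝ, 0 < ε →
      ε * (ldiff ε)^3 + (ldiff ε)^2 + 3 * k^2 * ε * (ldiff ε) + (5/3) * k^2 = 0 := by
    intro ε hε
    have h := hroot ε hε
    have hε' : (ε : ℝ) ≠ 0 := ne_of_gt hε
    unfold gradP at h
    have h2 : ((-(ldiff ε)^3 - (1/ε) * (ldiff ε)^2 - 3 * k^2 * (ldiff ε)
        - (5/3) * k^2 / ε : ℝ) : ℂ) = 0 := by
      push_cast
      convert h using 1
    rw [Complex.ofReal_eq_zero] at h2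
    field_simp at h2
    nlinarith [h2]
  set M : ℝ := C + 1 with hM
  have hMpos : 0 < M := by positivity
  -- bound |ldiff ε| ≤ M on (0, ε₀)
  have hbound : ∀ ε : ℝ, 0 < ε → ε < ε₀ → |ldiff ε| ≤ M := by
    intro ε hε hεlt
    obtain ⟨h1, h2⟩ := hα ε hε hεlt
    set x : ℝ := ldiff ε with hx
    have key : x^2 ≤ |x| * C + C := by
      have hid : ((x : ℂ))^2 = (x:ℂ) * ((x:ℂ) - α ε) + α ε * (x:ℂ) := by ring
      have : ‖(x:ℂ)^2‖ ≤ |x| * C + C := by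
        rw [hid]
        calc ‖(x:ℂ) * ((x:ℂ) - α ε) + α ε * (x:ℂ)‖
            ≤ ‖(x:ℂ) * ((x:ℂ) - α ε)‖ + ‖α ε * (x:ℂ)‖ :=
              norm_add_le _ _
          _ = |x| * ‖(x:ℂ) - α ε‖ + ‖α ε * (x:ℂ)‖ := by
              rw [norm_mul, Complex.norm_real, Real.norm_eq_abs]
          _ ≤ |x| * C + C := by
              have := abs_nonneg x
              gcongr
      have heq : ‖(x:ℂ)^2‖ = x^2 := by
        rw [← Complex.ofReal_pow, Complex.norm_real, Real.norm_eq_abs, abs_of_nonneg (sq_nonneg x)]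
      linarith [heq ▸ this]
    by_contra hcon
    push_neg at hcon
    have h3 : |x|^2 = x^2 := sq_abs x
    nlinarith [hcon, key, h3]
  -- choose ε small enough to get a contradiction
  set D : ℝ := M^3 + 3 * k^2 * M with hD
  have hDpos : 0 < D := by positivity
  have hk2 : 0 < k^2 := by positivity
  set ε : ℝ := min (ε₀/2) ((5/3) * k^2 / (2 * D)) with hεdef
  have hεpos : 0 < ε := lt_min (by linarith) (by positivity)
  have hεlt : ε < ε₀ := lt_of_le_of_lt (min_le_left _ _) (by linarith)
  have hεD : ε * D ≤ (5/6) * k^2 := by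
    have h1 : ε ≤ (5/3) * k^2 / (2 * D) := min_le_right _ _
    calc ε * D ≤ ((5/3) * k^2 / (2 * D)) * D := by nlinarith
      _ = (5/6) * k^2 := by field_simp; ring
  have hLb := hbound ε hεpos hεlt
  have heq := hreal ε hεpos
  set L : ℝ := ldiff ε with hL
  have hL1 : -M ≤ L := by
    have := abs_le.mp hLb; linarith [this.1]
  have hL2 : L ≤ M := (abs_le.mp hLb).2
  have hcube : -M^3 ≤ L^3 := by
    have h := mul_nonneg (by linarith : (0:ℝ) ≤ L + M)
      (by nlinarith [sq_nonneg (2*L - M), sq_nonneg M] : (0:ℝ) ≤ L^2 - L*M + M^2)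
    nlinarith [h]
  have p1 : -(ε * M^3) ≤ ε * L^3 := by nlinarith [hcube, hεpos]
  have p2 : -(3 * k^2 * ε * M) ≤ 3 * k^2 * ε * L := by
    have := mul_nonneg (mul_nonneg (by positivity : (0:ℝ) ≤ 3 * k^2) hεpos.le)
      (by linarith : (0:ℝ) ≤ L + M)
    nlinarith [this]
  have hexp : ε * D = ε * M^3 + 3 * k^2 * ε * M := by rw [hD]; ring
  linarith [sq_nonneg L, heq, hεD, p1, p2, hexp, hk2]
end

section
/- Fix a real wave number k ≠ 0 and for each ε > 0 let λ_diff(ε) denote the unique real root of P_k(λ) = −λ³ − (1/ε)λ² − 3k²λ − (5/3)k²/ε. Then λ_diff(ε) → −∞ as ε → 0⁺, and consequently for every fixed time t > 0 one has lim_{ε→0⁺} exp(λ_diff(ε)·t) = 0: the decay rate of solutions on the fast manifold diverges in the limit of vanishing Knudsen number. -/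
lemma grad_key_s17 (k ε l : ℝ) (hk : k ≠ 0) (hε : 0 < ε)
    (h : -l^3 - (1/ε) * l^2 - 3 * k^2 * l - (5/3) * k^2 / ε = 0) :
    l ≤ -5 / (9 * ε) := by
  have hε' : ε ≠ 0 := hε.ne'
  have hk2 : 0 < k^2 := by positivity
  have hR : ε * l^3 + l^2 + 3 * ε * k^2 * l + 5/3 * k^2 = 0 := by
    field_simp at h
    have h3 : (ε * l^3 + l^2 + 3 * ε * k^2 * l + 5/3 * k^2) * (3 * ε) = 0 := by
      linear_combination (-ε) * h
    exact (mul_eq_zero.mp h3).resolve_right (by positivity : (0:ℝ) < 3 * ε).ne'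
  rw [le_div_iff₀ (by positivity : (0:ℝ) < 9 * ε)]
  nlinarith [sq_nonneg l, mul_pos hε hk2, sq_nonneg (l * ε), hR]

theorem grad_fast_decay_rate_diverges
    (k : ℝ) (hk : k ≠ 0) (ldiff : ℝ → ℝ)
    (hroot : ∀ ε : ℝ, 0 < ε → gradP ε k (ldiff ε) = 0) :
    Filter.Tendsto ldiff (nhdsWithin 0 (Set.Ioi 0)) Filter.atBot ∧
    ∀ t : ℝ, 0 < t →
      Filter.Tendsto (fun ε : ℝ => Real.exp (ldiff ε * t))
        (nhdsWithin 0 (Set.Ioi 0)) (nhds 0) := by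
  have hbound : ∀ ε : ℝ, 0 < ε → ldiff ε ≤ -5 / (9 * ε) := by
    intro ε hε
    have h := hroot ε hε
    simp only [gradP] at h
    have hC : ((-(ldiff ε)^3 - (1/ε) * (ldiff ε)^2 - 3 * k^2 * (ldiff ε)
        - (5/3) * k^2 / ε : ℝ) : ℂ) = 0 := by
      push_cast
      linear_combination h
    have hR := Complex.ofReal_eq_zero.mp hC
    exact grad_key_s17 k ε (ldiff ε) hk hε hR
  have htb : Filter.Tendsto (fun ε : ℝ => -5 / (9 * ε))
      (nhdsWithin 0 (Set.Ioi 0)) Filter.atBot := by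
    have h1 : Filter.Tendsto (fun ε : ℝ => (5/9) * ε⁻¹)
        (nhdsWithin 0 (Set.Ioi 0)) Filter.atTop :=
      (tendsto_inv_nhdsGT_zero).const_mul_atTop (by norm_num)
    have := Filter.tendsto_neg_atBot_iff.mpr h1
    refine this.congr (fun ε => ?_)
    field_simp
  have hmain : Filter.Tendsto ldiff (nhdsWithin 0 (Set.Ioi 0)) Filter.atBot := by
    apply Filter.tendsto_atBot_mono' _ _ htb
    filter_upwards [self_mem_nhdsWithin] with ε (hε : ε ∈ Set.Ioi 0)
    exact hbound ε hε
  refine ⟨hmain, fun t ht => ?_⟩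
  have : Filter.Tendsto (fun ε : ℝ => ldiff ε * t)
      (nhdsWithin 0 (Set.Ioi 0)) Filter.atBot := hmain.atBot_mul_const ht
  exact Real.tendsto_exp_atBot.comp this
end

section
/- Fix ε > 0 and for each real k ≠ 0 let λ_diff(k) denote the unique real root of P_k(λ) = −λ³ − (1/ε)λ² − 3k²λ − (5/3)k²/ε. Then lim_{k→∞} λ_diff(k) = −5/(9ε): the fast real modes accumulate at −5/(9ε) as the wave number tends to infinity. -/
theorem grad_diffusion_mode_accumulates
    (ε : ℝ) (hε : 0 < ε) (ldiff : ℝ → ℝ)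
    (hroot : ∀ k : ℝ, k ≠ 0 → gradP ε k (ldiff k) = 0) :
    Filter.Tendsto ldiff Filter.atTop (nhds (-5 / (9 * ε))) := by
  have key : ∀ k : ℝ, k ≠ 0 → |ldiff k - (-5 / (9 * ε))| ≤ 1/(3*ε^3) * (1/k^2) := by
    intro k hk
    have hε0 : ε ≠ 0 := ne_of_gt hε
    have hk2 : (0:ℝ) < k ^ 2 := by positivity
    set x := ldiff k with hxdef
    have h := hroot k hk
    rw [gradP] at h
    have h' : ((-x^3 - (1/ε)*x^2 - 3*k^2*x - (5/3)*k^2/ε : ℝ) : ℂ) = 0 := by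
      push_cast
      linear_combination h
    have hR : -x^3 - (1/ε)*x^2 - 3*k^2*x - (5/3)*k^2/ε = 0 := by exact_mod_cast h'
    have hR' := hR
    field_simp at hR'
    have hP : 3*ε^2*x^3 + 3*ε*x^2 + 9*ε^2*k^2*x + 5*ε*k^2 = 0 := by linear_combination -ε * hR'
    have hx0 : x < 0 := by
      by_contra hc
      push_neg at hc
      nlinarith [mul_pos hε hk2, mul_nonneg (mul_nonneg (mul_nonneg hε.le hε.le) hk2.le) hc,
        mul_nonneg hε.le (sq_nonneg x),
        mul_nonneg (mul_nonneg (mul_nonneg hε.le hε.le) hc) (sq_nonneg x)]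
    have hu : 0 < ε * x + 1 := by
      by_contra hc
      push_neg at hc
      nlinarith [mul_pos hε hk2, mul_nonneg hε.le (sq_nonneg x),
        mul_nonpos_of_nonneg_of_nonpos (mul_nonneg hε.le (sq_nonneg x)) (by linarith : ε*x + 1 ≤ 0)]
    have hεx : 0 < x + 1/ε := by
      have h'' := div_pos hu hε
      have heq : (ε*x+1)/ε = x + 1/ε := by field_simp
      rwa [heq] at h''
    have e1 : 3*k^2*(x + 5/(9*ε)) = -(x^2*(x+1/ε)) := by linear_combination -hR
    have h2 : 0 ≤ x^2 * (x + 1/ε) := mul_nonneg (sq_nonneg x) hεx.le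
    have h3 : x^2 * (x + 1/ε) ≤ 1/ε^3 := by
      have hid : x^2 * (x + 1/ε) = (ε*x)^2*(ε*x+1)/ε^3 := by field_simp
      rw [hid, div_le_div_iff₀ (by positivity) (by positivity)]
      have q : (ε*x)^2*(ε*x+1) ≤ 1 := by
        nlinarith [mul_pos (show (0:ℝ) < 1 - ε*x by nlinarith) hu, sq_nonneg (ε*x)]
      nlinarith [mul_le_mul_of_nonneg_right q (le_of_lt (pow_pos hε 3))]
    have hc : 3*k^2 * (1/(3*ε^3)*(1/k^2)) = 1/ε^3 := by field_simp
    have hd : x - (-5/(9*ε)) = x + 5/(9*ε) := by ring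
    rw [abs_le, hd]
    have h3k : (0:ℝ) < 3*k^2 := by positivity
    constructor
    · have h'' : 3*k^2*(-(1/(3*ε^3)*(1/k^2))) ≤ 3*k^2*(x + 5/(9*ε)) := by
        rw [e1]; nlinarith [hc]
      exact le_of_mul_le_mul_left h'' h3k
    · have h'' : 3*k^2*(x + 5/(9*ε)) ≤ 3*k^2*(1/(3*ε^3)*(1/k^2)) := by
        rw [e1, hc]; linarith [h2, show (0:ℝ) < 1/ε^3 by positivity]
      exact le_of_mul_le_mul_left h'' h3k
  have hg : Filter.Tendsto (fun k : ℝ => 1/(3*ε^3) * (1/k^2)) Filter.atTop (nhds 0) := by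
    have h1 : Filter.Tendsto (fun k : ℝ => k^2) Filter.atTop Filter.atTop :=
      Filter.tendsto_pow_atTop (by norm_num)
    have h2 := h1.inv_tendsto_atTop
    have h3 := h2.const_mul (1/(3*ε^3))
    simpa [one_div, Function.comp] using h3
  have habs : Filter.Tendsto (fun k => |ldiff k - (-5 / (9 * ε))|) Filter.atTop (nhds 0) := by
    apply squeeze_zero' (Filter.Eventually.of_forall fun k => abs_nonneg _) _ hg
    filter_upwards [Filter.eventually_ge_atTop (1:ℝ)] with k hk1
    exact key k (by linarith)
  have h4 : Filter.Tendsto (fun k => ldiff k - (-5 / (9 * ε))) Filter.atTop (nhds 0) := by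
    rwa [tendsto_zero_iff_abs_tendsto_zero]
  simpa using tendsto_sub_nhds_zero_iff.mp h4
end

section
/- Fix ε > 0 and for each real k ≠ 0 let λ_ac(k) denote either of the two non-real complex-conjugate roots of P_k(λ) = −λ³ − (1/ε)λ² − 3k²λ − (5/3)k²/ε. Then lim_{k→∞} Re λ_ac(k) = −2/(9ε): the real parts of the slow acoustic modes accumulate at −2/(9ε) as the wave number tends to infinity. -/
/-- Real/imaginary part bookkeeping: a non-real root's real part satisfies a real cubic. -/
lemma grad_cubic (ε k : ℝ) (hε : 0 < ε) (z : ℂ) (hz : gradP ε k z = 0) (him : z.im ≠ 0) :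
    3*z.re*(2*z.re*ε+1)^2 + k^2*(9*ε^2*z.re + 2*ε) = 0 := by
  have hε' : (ε:ℂ) ≠ 0 := by exact_mod_cast hε.ne'
  have hz' : 3*(ε:ℂ)*z^3 + 3*z^2 + 9*ε*k^2*z + 5*k^2 = 0 := by
    unfold gradP at hz; field_simp at hz
    apply mul_left_cancel₀ hε'; linear_combination (-(ε:ℂ)) * hz
  have h1 := congrArg Complex.re hz'
  have h2 := congrArg Complex.im hz'
  simp [Complex.ext_iff, Complex.mul_re, Complex.mul_im, pow_succ] at h1 h2
  have hb2 : ε*z.im^2 = 3*ε*z.re^2 + 2*z.re + 3*ε*k^2 := by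
    have h3 : z.im * (3*ε*(3*z.re^2 - z.im^2) + 6*z.re + 9*ε*k^2) = 0 := by
      linear_combination h2
    rcases mul_eq_zero.1 h3 with h | h
    · exact absurd h him
    · nlinarith [h]
  linear_combination (-ε/2) * h1 + ((-9*z.re*ε-3)/2) * hb2

/-- Bounds on the real part coming from the real cubic. -/
lemma grad_bounds (ε k a : ℝ) (hε : 0 < ε) (hk : k ≠ 0)
    (h : 3*a*(2*a*ε+1)^2 + k^2*(9*ε^2*a + 2*ε) = 0) :
    -2/(9*ε) ≤ a ∧ a ≤ -2/(9*ε) + (2/(27*ε^3))/k^2 := by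
  have hk2 : 0 < k^2 := by positivity
  have hB0 : 0 ≤ 9*ε*a + 2 := by
    by_contra hc
    push_neg at hc
    have haneg : a < 0 := by nlinarith
    nlinarith [sq_nonneg (2*a*ε+1), mul_pos hk2 hε,
      mul_nonneg (neg_nonneg.2 haneg.le) (sq_nonneg (2*a*ε+1)),
      mul_pos (mul_pos hk2 hε) (neg_pos.2 hc)]
  have ha0 : a ≤ 0 := by
    by_contra hc
    push_neg at hc
    have hp : (0:ℝ) < 2*a*ε+1 := by nlinarith
    nlinarith [mul_pos (mul_pos hc hp) hp, mul_pos (mul_pos hk2 hε) hc,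
      mul_pos hk2 hε]
  have hsq : (2*a*ε+1)^2 ≤ 1 := by
    nlinarith [mul_nonneg (mul_nonneg (neg_nonneg.2 ha0) hε.le)
      (show (0:ℝ) ≤ 9*ε*a+9 by linarith)]
  have hBk : 3*ε^2*k^2*(9*ε*a+2) ≤ 2 := by
    nlinarith [mul_pos hk2 hε, mul_nonneg (mul_nonneg hk2.le (sq_nonneg ε)) hB0,
      mul_nonneg (neg_nonneg.2 ha0) (sub_nonneg.2 hsq)]
  constructor
  · have h1 : -(2/(9*ε)) ≤ a := by
      rw [neg_le, le_div_iff₀ (by positivity : (0:ℝ) < 9*ε)]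
      nlinarith
    linarith [h1, show -2/(9*ε) = -(2/(9*ε)) from by ring]
  · have h2 : a + 2/(9*ε) ≤ (2/(27*ε^3))/k^2 := by
      rw [le_div_iff₀ hk2, le_div_iff₀ (by positivity : (0:ℝ) < 27*ε^3)]
      have hq2 : 2/(9*ε)*(27*ε^3*k^2) = 6*ε^2*k^2 := by field_simp; ring
      nlinarith [hBk, hq2]
    linarith [h2, show -2/(9*ε) = -(2/(9*ε)) from by ring]

theorem grad_acoustic_mode_real_part_accumulates
    (ε : ℝ) (hε : 0 < ε) (lac : ℝ → ℂ)
    (hroot : ∀ k : ℝ, k ≠ 0 → gradP ε k (lac k) = 0)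
    (hnonreal : ∀ k : ℝ, k ≠ 0 → (lac k).im ≠ 0) :
    Filter.Tendsto (fun k : ℝ => (lac k).re) Filter.atTop (nhds (-2 / (9 * ε))) := by
  have hbound : ∀ k : ℝ, k ≠ 0 →
      -2/(9*ε) ≤ (lac k).re ∧ (lac k).re ≤ -2/(9*ε) + (2/(27*ε^3))/k^2 := by
    intro k hk
    exact grad_bounds ε k (lac k).re hε hk
      (grad_cubic ε k hε (lac k) (hroot k hk) (hnonreal k hk))
  have hupper : Filter.Tendsto (fun k : ℝ => -2/(9*ε) + (2/(27*ε^3))/k^2)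
      Filter.atTop (nhds (-2/(9*ε))) := by
    have h0 : Filter.Tendsto (fun k : ℝ => (2/(27*ε^3))/k^2) Filter.atTop (nhds 0) :=
      Filter.Tendsto.div_atTop tendsto_const_nhds (Filter.tendsto_pow_atTop two_ne_zero)
    simpa using (tendsto_const_nhds.add h0)
  have hlower : Filter.Tendsto (fun _ : ℝ => -2/(9*ε)) Filter.atTop (nhds (-2/(9*ε))) :=
    tendsto_const_nhds
  have := tendsto_of_tendsto_of_tendsto_of_le_of_le' hlower hupper
    (Filter.eventually_atTop.2 ⟨1, fun k hk => (hbound k (by linarith)).1⟩)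
    (Filter.eventually_atTop.2 ⟨1, fun k hk => (hbound k (by linarith)).2⟩)
  exact this
end
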